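/- Let G be the generic name. For every rational q and every nonempty open J ⊆ ℝ: J ⊩ q̂ ∈ G if and only if (↑q : ℝ) < x for every x ∈ J. -/

import Mathlib

/-- Names over ℝ: a name is a family of pairs of a name and an open set of reals. -/
inductive Name : Type 1
  | mk (ι : Type) (elem : ι → Name) (cond : ι → Set ℝ) (hopen : ∀ i, IsOpen (cond i)) : Name

namespace Name

/-- The index type of the family of pairs of a name. -/
def idx : Name → Type
  | mk ι _ _ _ => ι

/-- The name component of the `i`-th pair. -/
def elem : (σ : Name) → σ.idx → Name
  | mk _ e _ _ => e

/-- The open-set component of the `i`-th pair. -/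
def cond : (σ : Name) → σ.idx → Set ℝ
  | mk _ _ c _ => c

theorem cond_isOpen : ∀ (σ : Name) (i : σ.idx), IsOpen (σ.cond i)
  | mk _ _ _ h => h

/-- Rank of a name, used for the recursive definition of forcing. -/
noncomputable def rank : Name → Ordinal.{0}
  | mk _ e _ _ => Ordinal.lsub fun i => rank (e i)

theorem rank_elem_lt : ∀ (σ : Name) (i : σ.idx), (σ.elem i).rank < σ.rank
  | mk ι e c h, i => by
    simpa [rank, elem] using Ordinal.lt_lsub (fun i => rank (e i)) i

theorem maxmin_lex_lt {a' a : Ordinal.{0}} (h : a' < a) (b : Ordinal.{0}) :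
    Prod.Lex (· < ·) (· < ·) (max a' b, min a' b) (max a b, min a b) := by
  rcases le_total b a with hle | hle
  · rcases (max_le (le_of_lt h) hle).lt_or_eq with hlt | heq
    · exact Prod.Lex.left _ _ (by rw [max_eq_left hle]; exact hlt)
    · have hb : b = a := le_antisymm hle (not_lt.mp fun hba => (max_lt h hba).ne heq)
      subst hb
      rw [max_eq_right (le_of_lt h), min_eq_left (le_of_lt h), max_self, min_self]
      exact Prod.Lex.right _ h
  · rw [max_eq_right (le_of_lt (lt_of_lt_of_le h hle)), max_eq_right hle,
      min_eq_left (le_of_lt (lt_of_lt_of_le h hle)), min_eq_left hle]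
    exact Prod.Lex.right _ h

mutual
  /-- `feq σ τ J` means `J ⊩ σ = τ`. -/
  def feq (σ τ : Name) (J : Set ℝ) : Prop :=
    (∀ i : σ.idx, fmem (σ.elem i) τ (J ∩ σ.cond i)) ∧
    (∀ j : τ.idx, fmem (τ.elem j) σ (J ∩ τ.cond j))
  termination_by (max σ.rank τ.rank, min σ.rank τ.rank)
  decreasing_by
    · exact maxmin_lex_lt (rank_elem_lt σ i) τ.rank
    · rw [max_comm σ.rank, min_comm σ.rank]
      exact maxmin_lex_lt (rank_elem_lt τ j) σ.rank

  /-- `fmem σ τ J` means `J ⊩ σ ∈ τ`. -/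
  def fmem (σ τ : Name) (J : Set ℝ) : Prop :=
    ∀ r ∈ J, ∃ (j : τ.idx) (J' : Set ℝ), IsOpen J' ∧ r ∈ J' ∩ τ.cond j ∧
      feq σ (τ.elem j) (J' ∩ τ.cond j)
  termination_by (max σ.rank τ.rank, min σ.rank τ.rank)
  decreasing_by
    rw [max_comm σ.rank, min_comm σ.rank, max_comm σ.rank, min_comm σ.rank]
    exact maxmin_lex_lt (rank_elem_lt τ j) σ.rank
end

end Name

namespace Name

/-- Canonical name of a hereditary set (by ∈-recursion): pairs ⟨ŷ, univ⟩ for members y. -/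
def ofPSet : PSet → Name
  | PSet.mk α A => Name.mk α (fun a => ofPSet (A a)) (fun _ => Set.univ) (fun _ => isOpen_univ)

/-- Canonical name of a ZF set. -/
noncomputable def canonical (x : ZFSet) : Name := ofPSet x.out

end Name

/-- The finite von Neumann ordinals as ZF sets. -/
def natZF : ℕ → ZFSet
  | 0 => ∅
  | n+1 => insert (natZF n) (natZF n)

/-- Integers coded as ZF sets. -/
def intZF : ℤ → ZFSet := fun z => ZFSet.pair (natZF z.toNat) (natZF (-z).toNat)

/-- Rationals coded as ZF sets (as a pair of numerator and denominator). -/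
def ratZF (q : ℚ) : ZFSet := ZFSet.pair (intZF q.num) (natZF q.den)

/-- The canonical name q̂ of a rational number q. -/
noncomputable def ratName (q : ℚ) : Name := Name.canonical (ratZF q)

/-- The generic name G: its pairs are ⟨q̂, J⟩ for q rational and J a nonempty
open interval all of whose members exceed q. -/
noncomputable def generic : Name :=
  Name.mk {p : ℚ × ℝ × ℝ // (Set.Ioo p.2.1 p.2.2).Nonempty ∧
      ∀ x ∈ Set.Ioo p.2.1 p.2.2, (p.1 : ℝ) < x}
    (fun p => ratName p.1.1)
    (fun p => Set.Ioo p.1.2.1 p.1.2.2)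
    (fun p => isOpen_Ioo)

/-!
Forced equality of two canonical names on a nonempty set already makes the sets equal,
because all conditions of a canonical name are `univ` and the witness point survives the
recursion. Hence a pair `⟨p̂, I⟩` of `G` witnessing `q̂ ∈ G` at `r` has `p = q` and `r ∈ I`,
so `q < r`. Conversely, if `q < r`, the pair `⟨q̂, (q, r + 1)⟩` witnesses `q̂ ∈ G` at `r`.
-/

namespace Name

theorem feq_refl : ∀ (σ : Name) (J : Set ℝ), feq σ σ J
  | mk _ e _ _, J => by
    rw [feq]
    refine ⟨fun i => ?_, fun i => ?_⟩ <;>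
    · rw [fmem]
      intro r hr
      exact ⟨i, Set.univ, isOpen_univ, ⟨trivial, hr.2⟩, feq_refl (e i) _⟩

theorem feq_symm {σ τ : Name} {J : Set ℝ} (h : feq σ τ J) : feq τ σ J := by
  rw [feq] at h ⊢
  exact h.symm

theorem equiv_of_feq_ofPSet : ∀ (x y : PSet) (J : Set ℝ),
    feq (ofPSet x) (ofPSet y) J → J.Nonempty → PSet.Equiv x y
  | ⟨α, A⟩, ⟨β, B⟩, J, h, ⟨r, hr⟩ => by
    rw [ofPSet, ofPSet, feq] at h
    obtain ⟨hleft, hright⟩ := h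
    refine ⟨fun i => ?_, fun j => ?_⟩
    · unfold fmem at hleft
      obtain ⟨j, J', -, hrJ', hfeq⟩ := hleft i r ⟨hr, trivial⟩
      exact ⟨j, equiv_of_feq_ofPSet _ _ _ hfeq ⟨r, hrJ'⟩⟩
    · unfold fmem at hright
      obtain ⟨i, J', -, hrJ', hfeq⟩ := hright j r ⟨hr, trivial⟩
      exact ⟨i, equiv_of_feq_ofPSet _ _ _ (feq_symm hfeq) ⟨r, hrJ'⟩⟩

theorem eq_of_feq_canonical {x y : ZFSet} {J : Set ℝ}
    (h : feq (canonical x) (canonical y) J) (hJ : J.Nonempty) : x = y := by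
  rw [← x.out_eq, ← y.out_eq]
  exact Quotient.sound (equiv_of_feq_ofPSet _ _ _ h hJ)

end Name

theorem natZF_mem_of_lt {n m : ℕ} (h : n < m) : natZF n ∈ natZF m := by
  induction m, h using Nat.le_induction with
  | base => exact ZFSet.mem_insert _ _
  | succ k _ ih => exact ZFSet.mem_insert_of_mem _ ih

theorem natZF_injective : Function.Injective natZF := by
  intro n m h
  by_contra hne
  rcases Nat.lt_or_gt_of_ne hne with hlt | hlt <;>
    exact ZFSet.mem_irrefl _ (h ▸ natZF_mem_of_lt hlt)

theorem intZF_injective : Function.Injective intZF := by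
  intro a b h
  obtain ⟨hpos, hneg⟩ := ZFSet.pair_injective h
  have := natZF_injective hpos
  have := natZF_injective hneg
  omega

theorem ratZF_injective : Function.Injective ratZF := by
  intro a b h
  obtain ⟨hnum, hden⟩ := ZFSet.pair_injective h
  exact Rat.ext (intZF_injective hnum) (natZF_injective hden)

theorem eq_of_feq_ratName {p q : ℚ} {J : Set ℝ} (h : Name.feq (ratName p) (ratName q) J)
    (hJ : J.Nonempty) : p = q :=
  ratZF_injective (Name.eq_of_feq_canonical h hJ)

theorem generic_mem_iff (q : ℚ) (J : Set ℝ) (hJ : IsOpen J) (hne : J.Nonempty) :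
    Name.fmem (ratName q) generic J ↔ ∀ x ∈ J, (q : ℝ) < x := by
  rw [Name.fmem]
  constructor
  · intro h r hr
    obtain ⟨j, J', -, ⟨hrJ', hrI⟩, hfeq⟩ := h r hr
    obtain rfl : q = j.1.1 := eq_of_feq_ratName hfeq ⟨r, hrJ', hrI⟩
    exact j.2.2 r hrI
  · intro h r hr
    have hrI : r ∈ Set.Ioo (q : ℝ) (r + 1) := ⟨h r hr, lt_add_one r⟩
    exact ⟨⟨(q, q, r + 1), ⟨r, hrI⟩, fun x hx => hx.1⟩, Set.univ, isOpen_univ, ⟨trivial, hrI⟩,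
      Name.feq_refl _ _⟩
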